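/- For x, y real and ρ ∈ (−1, 1) with ρ ≠ 0, the bivariate normal cdf satisfies Φ²_ρ(x,y) = ((1 − sgn(ρ))/2)·Φ(x) + sgn(ρ)·(Φ²_ρ̃(z, ỹ) + Φ²_ρ̃(−z, x)), where ρ̃ = −√((1−|ρ|)/2), ỹ = y·sgn(ρ), and z = (x − ỹ)/√(2(1−|ρ|)). -/

import Mathlib

/-!
`Φ²_ρ(x, y)` is the standard Gaussian measure of the wedge `{p ∈ ℝ² | ⟪u, p⟫ ≤ x, ⟪v, p⟫ ≤ y}`
for any unit vectors `u`, `v` with `⟪u, v⟫ = ρ`: the linear map `p ↦ (⟪u, p⟫, ⟪v, p⟫)` has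
determinant `±√(1 - ρ²)` and pulls the density of `Φ²_ρ` back to the standard Gaussian density.
Take `u = e₁`, `v = (ρ, √(1 - ρ²))` and cut the wedge through its apex along the line
`⟪n, p⟫ = (x - y) / c`, where `u - v = c • n` with `n` a unit vector and `c = √(2(1 - ρ))`.
The two halves are the wedges bounded by `n, v` and by `-n, u`, and
`⟪n, v⟫ = ⟪-n, u⟫ = -√((1 - ρ) / 2)`; this is the formula for `0 ≤ ρ`. For `ρ < 0`, cutting the
half-plane `{p₁ ≤ x}` along `⟪v, p⟫ = y` gives `Φ²_ρ(x, y) + Φ²_{-ρ}(x, -y) = Φ(x)`, which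
reduces to `-ρ`.
-/

open Real MeasureTheory

/-- Standard normal cdf. -/
noncomputable def stdCdf (x : ℝ) : ℝ :=
  ∫ t in Set.Iic x, Real.exp (-t ^ 2 / 2) / Real.sqrt (2 * Real.pi)

/-- Bivariate standard normal cdf with correlation ρ. -/
noncomputable def biCdf (ρ x y : ℝ) : ℝ :=
  (1 / (2 * Real.pi * Real.sqrt (1 - ρ ^ 2))) *
    ∫ s in Set.Iic x, ∫ t in Set.Iic y,
      Real.exp (-(s ^ 2 - 2 * ρ * s * t + t ^ 2) / (2 * (1 - ρ ^ 2)))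

open Set

section LinearChangeOfVariables

variable {E F : Type*} [NormedAddCommGroup E] [NormedSpace ℝ E] [MeasurableSpace E] [BorelSpace E]
  [FiniteDimensional ℝ E] [NormedAddCommGroup F]
  (μ : Measure E) [μ.IsAddHaarMeasure] {f : E →ₗ[ℝ] E}

theorem LinearMap.measurableEmbedding_of_det_ne_zero (hf : LinearMap.det f ≠ 0) :
    MeasurableEmbedding f :=
  (f.equivOfDetNeZero hf).toContinuousLinearEquiv.toHomeomorph.measurableEmbedding

theorem integrable_comp_linearMap_iff (hf : LinearMap.det f ≠ 0) {g : E → F} :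
    Integrable (g ∘ f) μ ↔ Integrable g μ := by
  rw [← (f.measurableEmbedding_of_det_ne_zero hf).integrable_map_iff,
    Measure.map_linearMap_addHaar_eq_smul_addHaar μ hf,
    integrable_smul_measure (by simpa using hf) ENNReal.ofReal_ne_top]

theorem setIntegral_preimage_linearMap [NormedSpace ℝ F] (hf : LinearMap.det f ≠ 0) (g : E → F)
    (s : Set E) :
    ∫ x in f ⁻¹' s, g (f x) ∂μ = |LinearMap.det f|⁻¹ • ∫ x in s, g x ∂μ := by
  rw [← (f.measurableEmbedding_of_det_ne_zero hf).setIntegral_map,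
    Measure.map_linearMap_addHaar_eq_smul_addHaar μ hf, Measure.restrict_smul,
    integral_smul_measure, ENNReal.toReal_ofReal (abs_nonneg _), abs_inv]

end LinearChangeOfVariables

namespace BivariateNormal

def dot (u p : ℝ × ℝ) : ℝ := u.1 * p.1 + u.2 * p.2

theorem dot_one_zero (p : ℝ × ℝ) : dot (1, 0) p = p.1 := by
  simp [dot]

theorem dot_neg_left (u p : ℝ × ℝ) : dot (-u) p = -dot u p := by
  simp only [dot, Prod.fst_neg, Prod.snd_neg]; ring

theorem dot_neg_neg (u p : ℝ × ℝ) : dot (-u) (-p) = dot u p := by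
  simp only [dot, Prod.fst_neg, Prod.snd_neg, neg_mul_neg]

theorem ne_zero_of_dot_self_eq_one {u : ℝ × ℝ} (hu : dot u u = 1) : u ≠ 0 := by
  rintro rfl; simp [dot] at hu

def dotPair (u v : ℝ × ℝ) : ℝ × ℝ →ₗ[ℝ] ℝ × ℝ where
  toFun p := (dot u p, dot v p)
  map_add' p q := by simp only [dot, Prod.fst_add, Prod.snd_add, Prod.mk_add_mk]; congr 1 <;> ring
  map_smul' r p := by
    simp only [dot, Prod.smul_fst, Prod.smul_snd, smul_eq_mul, RingHom.id_apply, Prod.smul_mk]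
    congr 1 <;> ring

@[simp]
theorem dotPair_apply (u v p : ℝ × ℝ) : dotPair u v p = (dot u p, dot v p) := rfl

theorem det_dotPair (u v : ℝ × ℝ) : LinearMap.det (dotPair u v) = u.1 * v.2 - u.2 * v.1 := by
  rw [← LinearMap.det_toMatrix (Module.Basis.finTwoProd ℝ), Matrix.det_fin_two]
  simp [LinearMap.toMatrix_apply, dot]

theorem sq_det_dotPair {u v : ℝ × ℝ} (hu : dot u u = 1) (hv : dot v v = 1) :
    LinearMap.det (dotPair u v) ^ 2 = 1 - dot u v ^ 2 := by
  rw [det_dotPair]; simp only [dot] at *; linear_combination (v.1 ^ 2 + v.2 ^ 2) * hu + hv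

noncomputable def gaussKernel (p : ℝ × ℝ) : ℝ := exp (-(p.1 ^ 2 + p.2 ^ 2) / 2)

noncomputable def corrKernel (ρ : ℝ) (q : ℝ × ℝ) : ℝ :=
  exp (-(q.1 ^ 2 - 2 * ρ * q.1 * q.2 + q.2 ^ 2) / (2 * (1 - ρ ^ 2)))

theorem corrKernel_comp_dotPair {u v : ℝ × ℝ} (hu : dot u u = 1) (hv : dot v v = 1)
    (hρ : dot u v ^ 2 < 1) : corrKernel (dot u v) ∘ dotPair u v = gaussKernel := by
  funext p
  have hσ : 1 - dot u v ^ 2 ≠ 0 := by linarith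
  have gram : dot u p ^ 2 - 2 * dot u v * dot u p * dot v p + dot v p ^ 2
      = (1 - dot u v ^ 2) * (p.1 ^ 2 + p.2 ^ 2) := by
    simp only [dot] at *
    linear_combination
      ((v.1 ^ 2 + v.2 ^ 2) * (p.1 ^ 2 + p.2 ^ 2) - (v.1 * p.1 + v.2 * p.2) ^ 2) * hu
        + (p.1 ^ 2 + p.2 ^ 2 - (u.1 * p.1 + u.2 * p.2) ^ 2) * hv
  simp only [Function.comp_apply, dotPair_apply, corrKernel, gaussKernel, gram]
  congr 1
  field_simp

theorem integrable_gaussKernel : Integrable gaussKernel := by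
  have h := integrable_exp_neg_mul_sq (b := 1 / 2) (by norm_num)
  rw [Measure.volume_eq_prod]
  refine (h.mul_prod h).congr (Filter.Eventually.of_forall fun p => ?_)
  simp only [gaussKernel, ← exp_add]
  ring_nf

noncomputable def gaussMass (S : Set (ℝ × ℝ)) : ℝ := (2 * π)⁻¹ * ∫ p in S, gaussKernel p

def wedge (u v : ℝ × ℝ) (a b : ℝ) : Set (ℝ × ℝ) := dotPair u v ⁻¹' (Iic a ×ˢ Iic b)

theorem measurableSet_wedge (u v : ℝ × ℝ) (a b : ℝ) : MeasurableSet (wedge u v a b) :=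
  (dotPair u v).continuous_of_finiteDimensional.measurable
    (measurableSet_Iic.prod measurableSet_Iic)

theorem gaussMass_wedge {u v : ℝ × ℝ} (hu : dot u u = 1) (hv : dot v v = 1)
    (hρ : dot u v ^ 2 < 1) (a b : ℝ) : gaussMass (wedge u v a b) = biCdf (dot u v) a b := by
  have hsq := sq_det_dotPair hu hv
  have hdet : |LinearMap.det (dotPair u v)| = √(1 - dot u v ^ 2) := by
    rw [← sqrt_sq_eq_abs, hsq]
  have hdet0 : LinearMap.det (dotPair u v) ≠ 0 := fun h => by
    rw [h] at hsq; linarith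
  have hint : IntegrableOn (corrKernel (dot u v)) (Iic a ×ˢ Iic b) := by
    refine ((integrable_comp_linearMap_iff volume hdet0).1 ?_).integrableOn
    rw [corrKernel_comp_dotPair hu hv hρ]
    exact integrable_gaussKernel
  calc gaussMass (wedge u v a b)
      = (2 * π)⁻¹ * ∫ p in wedge u v a b, corrKernel (dot u v) (dotPair u v p) := by
        rw [gaussMass, ← corrKernel_comp_dotPair hu hv hρ]; rfl
    _ = (2 * π)⁻¹ * (|LinearMap.det (dotPair u v)|⁻¹ *
          ∫ q in Iic a ×ˢ Iic b, corrKernel (dot u v) q) := by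
        rw [wedge, setIntegral_preimage_linearMap volume hdet0, smul_eq_mul]
    _ = biCdf (dot u v) a b := by
        rw [Measure.volume_eq_prod, setIntegral_prod _ hint, hdet, biCdf]
        simp only [corrKernel]
        ring

theorem gaussMass_Iic_prod_univ (x : ℝ) : gaussMass (Iic x ×ˢ univ) = stdCdf x := by
  have hsplit : ∀ p : ℝ × ℝ, gaussKernel p = exp (-p.1 ^ 2 / 2) * exp (-p.2 ^ 2 / 2) := by
    intro p; rw [gaussKernel, ← exp_add]; ring_nf
  have htotal : ∫ t : ℝ, exp (-t ^ 2 / 2) = √(2 * π) := by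
    convert integral_gaussian (1 / 2) using 3 <;> ring_nf
  have hnorm : (2 * π)⁻¹ * √(2 * π) = (√(2 * π))⁻¹ := by
    field_simp
    exact sq_sqrt (by positivity)
  simp only [gaussMass, hsplit, Measure.volume_eq_prod]
  rw [setIntegral_prod_mul (fun t => exp (-t ^ 2 / 2)) (fun t => exp (-t ^ 2 / 2)),
    Measure.restrict_univ, htotal, stdCdf, integral_div, div_eq_mul_inv, ← hnorm]
  ring

theorem volume_dot_eq_const {n : ℝ × ℝ} (hn : n ≠ 0) (k : ℝ) :
    volume {p : ℝ × ℝ | dot n p = k} = 0 := by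
  have hdet : LinearMap.det (dotPair n (-n.2, n.1)) ≠ 0 := by
    rw [det_dotPair]
    contrapose! hn
    simp only at hn
    have hsq : n.1 ^ 2 + n.2 ^ 2 = 0 := by linarith
    obtain ⟨h1, h2⟩ := (add_eq_zero_iff_of_nonneg (sq_nonneg _) (sq_nonneg _)).1 hsq
    exact Prod.ext (pow_eq_zero_iff two_ne_zero |>.1 h1) (pow_eq_zero_iff two_ne_zero |>.1 h2)
  have hline : {p : ℝ × ℝ | dot n p = k} = dotPair n (-n.2, n.1) ⁻¹' ({k} ×ˢ univ) := by
    ext p; simp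
  rw [hline, Measure.addHaar_preimage_linearMap volume hdet, Measure.volume_eq_prod,
    Measure.prod_prod, Real.volume_singleton, zero_mul, mul_zero]

theorem gaussMass_eq_inter_le_add_inter_ge {S : Set (ℝ × ℝ)} (hS : MeasurableSet S)
    {n : ℝ × ℝ} (hn : n ≠ 0) (k : ℝ) :
    gaussMass S = gaussMass (S ∩ {p | dot n p ≤ k}) + gaussMass (S ∩ {p | k ≤ dot n p}) := by
  have hcover : S = (S ∩ {p | dot n p ≤ k}) ∪ (S ∩ {p | k ≤ dot n p}) := by
    rw [← inter_union_distrib_left, ← ofPred_or]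
    simp only [le_total, ofPred_true, inter_univ]
  have hdisj : AEDisjoint volume (S ∩ {p | dot n p ≤ k}) (S ∩ {p | k ≤ dot n p}) :=
    measure_mono_null (fun p ⟨⟨_, hle⟩, ⟨_, hge⟩⟩ => le_antisymm hle hge)
      (volume_dot_eq_const hn k)
  have hmeas : MeasurableSet (S ∩ {p | k ≤ dot n p}) :=
    hS.inter (measurableSet_le measurable_const (by unfold dot; fun_prop))
  simp only [gaussMass]
  rw [← mul_add, ← setIntegral_union₀ hdisj hmeas.nullMeasurableSet
    integrable_gaussKernel.integrableOn integrable_gaussKernel.integrableOn, ← hcover]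

theorem biCdf_add_biCdf_neg_eq_stdCdf {ρ : ℝ} (hρ : ρ ^ 2 < 1) (x y : ℝ) :
    biCdf ρ x y + biCdf (-ρ) x (-y) = stdCdf x := by
  set w : ℝ × ℝ := (ρ, √(1 - ρ ^ 2))
  have he : dot (1, 0) (1, 0) = 1 := dot_one_zero _
  have hw : dot w w = 1 := by
    have := sq_sqrt (by linarith : 0 ≤ 1 - ρ ^ 2)
    simp only [dot, w]; linarith
  have hw' : dot (-w) (-w) = 1 := (dot_neg_neg w w).trans hw
  have hew : dot (1, 0) w = ρ := dot_one_zero w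
  have hew' : dot (1, 0) (-w) = -ρ := dot_one_zero (-w)
  calc biCdf ρ x y + biCdf (-ρ) x (-y)
      = gaussMass (wedge (1, 0) w x y) + gaussMass (wedge (1, 0) (-w) x (-y)) := by
        rw [gaussMass_wedge he hw (by rwa [hew]), gaussMass_wedge he hw' (by rwa [hew', neg_sq]),
          hew, hew']
    _ = gaussMass (Iic x ×ˢ univ) := by
        rw [gaussMass_eq_inter_le_add_inter_ge (measurableSet_Iic.prod MeasurableSet.univ)
          (ne_zero_of_dot_self_eq_one hw) y]
        congr 2 <;> ext p <;>
          simp only [wedge, mem_preimage, dotPair_apply, mem_prod, mem_Iic, mem_inter_iff,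
            mem_ofPred_eq, mem_univ, and_true, dot_one_zero, dot_neg_left, neg_le_neg_iff]
    _ = stdCdf x := gaussMass_Iic_prod_univ x

theorem biCdf_eq_biCdf_add_biCdf {ρ : ℝ} (hlo : -1 < ρ) (hhi : ρ < 1) (x y : ℝ) :
    biCdf ρ x y =
      biCdf (-√((1 - ρ) / 2)) ((x - y) / √(2 * (1 - ρ))) y +
        biCdf (-√((1 - ρ) / 2)) (-((x - y) / √(2 * (1 - ρ)))) x := by
  set c := √(2 * (1 - ρ))
  set σ := √(1 - ρ ^ 2)
  set k := (x - y) / c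
  have hc : 0 < c := sqrt_pos.2 (by linarith)
  have hc2 : c ^ 2 = 2 * (1 - ρ) := sq_sqrt (by linarith)
  have hσ2 : σ ^ 2 = 1 - ρ ^ 2 := sq_sqrt (by nlinarith)
  have hρ' : √((1 - ρ) / 2) = (1 - ρ) / c := by
    rw [show (1 - ρ) / 2 = ((1 - ρ) / c) ^ 2 by field_simp; rw [hc2]; ring]
    exact sqrt_sq (div_nonneg (by linarith) hc.le)
  set w : ℝ × ℝ := (ρ, σ)
  set n : ℝ × ℝ := ((1 - ρ) / c, -σ / c)
  have hcut : ∀ p, dot (1, 0) p = c * dot n p + dot w p := fun p => by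
    simp only [dot, n, w]; field_simp; ring
  have he : dot (1, 0) (1, 0) = 1 := dot_one_zero _
  have hw : dot w w = 1 := by simp only [dot, w]; nlinarith
  have hn : dot n n = 1 := by
    simp only [dot, n]; field_simp; linear_combination hσ2 - hc2
  have hn' : dot (-n) (-n) = 1 := (dot_neg_neg n n).trans hn
  have hew : dot (1, 0) w = ρ := dot_one_zero w
  have hnw : dot n w = -√((1 - ρ) / 2) := by
    rw [hρ']; simp only [dot, n, w]; field_simp; linear_combination -hσ2
  have hne : dot (-n) (1, 0) = -√((1 - ρ) / 2) := by
    rw [hρ']; simp only [dot, n, Prod.fst_neg, Prod.snd_neg]; ring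
  have hsq : (-√((1 - ρ) / 2)) ^ 2 < 1 := by
    rw [neg_sq, sq_sqrt (by linarith)]; linarith
  calc biCdf ρ x y = gaussMass (wedge (1, 0) w x y) := by
        rw [gaussMass_wedge he hw (by rw [hew]; nlinarith), hew]
    _ = gaussMass (wedge n w k y) + gaussMass (wedge (-n) (1, 0) (-k) x) := by
        rw [gaussMass_eq_inter_le_add_inter_ge (measurableSet_wedge _ _ _ _)
          (ne_zero_of_dot_self_eq_one hn) k]
        have hk : ∀ t, t ≤ k ↔ c * t ≤ x - y := fun t => by rw [le_div_iff₀' hc]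
        have hk' : ∀ t, k ≤ t ↔ x - y ≤ c * t := fun t => by rw [div_le_iff₀' hc]
        congr 2 <;> ext p <;>
          simp only [wedge, mem_preimage, dotPair_apply, mem_prod, mem_Iic, mem_inter_iff,
            mem_ofPred_eq, dot_neg_left, neg_le_neg_iff, hk, hk'] <;>
          have hp := hcut p
        · constructor
          · rintro ⟨⟨-, hy⟩, hn⟩; exact ⟨hn, hy⟩
          · rintro ⟨hn, hy⟩; exact ⟨⟨by linarith, hy⟩, hn⟩
        · constructor
          · rintro ⟨⟨hx, -⟩, hn⟩; exact ⟨hn, hx⟩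
          · rintro ⟨hn, hx⟩; exact ⟨⟨hx, by linarith⟩, hn⟩
    _ = _ := by
        rw [gaussMass_wedge hn hw (hnw ▸ hsq), gaussMass_wedge hn' he (hne ▸ hsq), hnw, hne]

end BivariateNormal

open BivariateNormal

theorem biCdf_split (x y ρ : ℝ) (hρ : ρ ∈ Set.Ioo (-1:ℝ) 1) :
    biCdf ρ x y =
      ((1 - (if 0 ≤ ρ then (1:ℝ) else -1)) / 2) * stdCdf x +
        (if 0 ≤ ρ then (1:ℝ) else -1) *
          (biCdf (-Real.sqrt ((1 - |ρ|) / 2))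
              ((x - y * (if 0 ≤ ρ then (1:ℝ) else -1)) / Real.sqrt (2 * (1 - |ρ|)))
              (y * (if 0 ≤ ρ then (1:ℝ) else -1)) +
            biCdf (-Real.sqrt ((1 - |ρ|) / 2))
              (-((x - y * (if 0 ≤ ρ then (1:ℝ) else -1)) / Real.sqrt (2 * (1 - |ρ|))))
              x) := by
  obtain ⟨hlo, hhi⟩ := hρ
  rcases le_or_gt 0 ρ with hnonneg | hneg
  · rw [if_pos hnonneg, abs_of_nonneg hnonneg, sub_self, zero_div, zero_mul, zero_add, one_mul,
      mul_one]
    exact biCdf_eq_biCdf_add_biCdf hlo hhi x y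
  · rw [if_neg hneg.not_ge, abs_of_neg hneg, mul_neg_one]
    have hreflect := biCdf_add_biCdf_neg_eq_stdCdf (by nlinarith : ρ ^ 2 < 1) x y
    have hsplit := biCdf_eq_biCdf_add_biCdf (by linarith : -1 < -ρ) (by linarith) x (-y)
    linarith
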